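/- arXiv:1709.02950 — 2 statements merged into one kernel-verified Lean document; each statement's English description precedes it below -/
import Mathlib

section
/- Hardware-quality scaling law, first case (Corollary 1): in the asymptotic setting with scaling exponents z_t > 0 and z_r ≥ 0, for every UE index k the spectral efficiency satisfies R_k(M) → 0 as the number of APs M → ∞. -/
open Finset Filter Topology

noncomputable section

/-- Fixed system parameters of the cell-free massive MIMO uplink:
`K` UEs, pilot length `τ`, pilot power `ρp`, noise power `σ2`,
power-control coefficients `γ`, pilot correlations `δ` (δ k k' = |φ_k^H φ_{k'}|²),
and large-scale fading coefficients `β m k` (AP index `m ∈ ℕ`, UE index `k`). -/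
structure Params where
  K : ℕ
  τ : ℕ
  ρp : ℝ
  σ2 : ℝ
  γ : Fin K → ℝ
  δ : Fin K → Fin K → ℝ
  β : ℕ → Fin K → ℝ

namespace Params

variable (P : Params)

/-- LMMSE coefficient `c_{mk}` for hardware quality factors `κt, κr`. -/
def c (κt κr : ℝ) (m : ℕ) (k : Fin P.K) : ℝ :=
  Real.sqrt ((P.τ : ℝ) * P.ρp * κr * κt) * P.β m k /
    (P.ρp * ∑ k' : Fin P.K, P.β m k' *
      (κr * κt * (P.τ : ℝ) * P.δ k k' + (1 - κr * κt)) + P.σ2)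

/-- Mean-square of the LMMSE channel estimate `λ_{mk}`. -/
def lam (κt κr : ℝ) (m : ℕ) (k : Fin P.K) : ℝ :=
  Real.sqrt ((P.τ : ℝ) * P.ρp * κr * κt) * P.β m k * P.c κt κr m k

/-- Desired-signal term `A_k` (using APs `0, …, M-1`). -/
def A (κt κr : ℝ) (M : ℕ) (k : Fin P.K) : ℝ :=
  P.γ k * (∑ m ∈ Finset.range M, P.lam κt κr m k) ^ 2

/-- Non-coherent interference term `B_k`. -/
def B (κt κr : ℝ) (M : ℕ) (k : Fin P.K) : ℝ :=
  ∑ k' : Fin P.K, P.γ k' *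
    ((∑ m ∈ Finset.range M, P.lam κt κr m k * P.β m k') +
      P.ρp * (1 - κr) * ∑ m ∈ Finset.range M, (P.c κt κr m k) ^ 2 * (P.β m k') ^ 2)

/-- Coherent interference term `C_k`. -/
def C (κt κr : ℝ) (M : ℕ) (k : Fin P.K) : ℝ :=
  ∑ k' : Fin P.K, P.γ k' * (P.δ k k' + (1 - κt) / (κt * (P.τ : ℝ))) *
    (∑ m ∈ Finset.range M, P.lam κt κr m k * (P.β m k' / P.β m k)) ^ 2

/-- AP receiver-distortion term `D_k`. -/
def D (κt κr : ℝ) (M : ℕ) (k : Fin P.K) : ℝ :=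
  ∑ m ∈ Finset.range M, ∑ k' : Fin P.K, P.γ k' *
    (P.lam κt κr m k * P.β m k' +
      (P.c κt κr m k) ^ 2 * (1 - κr) * P.ρp * (P.β m k') ^ 2 +
      (P.c κt κr m k) ^ 2 * κr * P.ρp * P.β m k' *
        ((P.τ : ℝ) * κt * P.δ k k' + (1 - κt)))

/-- Noise term `E_k` for uplink power `ρu`. -/
def E (κt κr ρu : ℝ) (M : ℕ) (k : Fin P.K) : ℝ :=
  (P.σ2 / ρu) * ∑ m ∈ Finset.range M, P.lam κt κr m k

/-- Effective SINR of UE `k` (Theorem 1). -/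
def SINR (κt κr ρu : ℝ) (M : ℕ) (k : Fin P.K) : ℝ :=
  κr * κt * P.A κt κr M k /
    (κr * P.B κt κr M k + κr * P.C κt κr M k - κr * κt * P.A κt κr M k +
      (1 - κr) * P.D κt κr M k + P.E κt κr ρu M k)

/-- Spectral efficiency of UE `k` (Theorem 1): `R_k = log₂(1 + SINR_k)`. -/
def R (κt κr ρu : ℝ) (M : ℕ) (k : Fin P.K) : ℝ :=
  Real.logb 2 (1 + P.SINR κt κr ρu M k)

/-- Standing assumptions on the fixed parameters: `K ≥ 1`, `τ ≥ 1`, `ρp, σ² > 0`,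
`γ_k ∈ (0,1]`, `δ_{kk'} ∈ [0,1]`, `δ_{kk} = 1`. -/
def Valid : Prop :=
  1 ≤ P.K ∧ 1 ≤ P.τ ∧ 0 < P.ρp ∧ 0 < P.σ2 ∧
  (∀ k, 0 < P.γ k ∧ P.γ k ≤ 1) ∧
  (∀ k k', 0 ≤ P.δ k k' ∧ P.δ k k' ≤ 1) ∧
  (∀ k, P.δ k k = 1)

end Params

/-! The coherent interference `C_k` contains the desired signal `A_k` (its `k' = k` summand is
`γ_k (1 + (1 - κt)/(κt τ)) (∑ λ)²`), and every other term of the SINR denominator is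
nonnegative; hence `SINR_k ≤ κt / (1 - κt)` whatever the number of APs. When `κt → 0` this cap
vanishes, so `SINR_k → 0` and `R_k → log₂ 1 = 0`. -/

namespace Params

variable (P : Params)

section

variable {κt κr : ℝ}

lemma c_nonneg (hP : P.Valid) (hβ : ∀ m k, 0 ≤ P.β m k) (hκt : κt ∈ Set.Icc (0 : ℝ) 1)
    (hκr : κr ∈ Set.Icc (0 : ℝ) 1) (m : ℕ) (k : Fin P.K) : 0 ≤ P.c κt κr m k := by
  obtain ⟨-, -, hρp, hσ2, -, hδ, -⟩ := hP
  obtain ⟨hκt0, hκt1⟩ := hκt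
  obtain ⟨hκr0, hκr1⟩ := hκr
  have hκ : κr * κt ≤ 1 := mul_le_one₀ hκr1 hκt0 hκt1
  refine div_nonneg (mul_nonneg (Real.sqrt_nonneg _) (hβ m k)) ?_
  refine add_nonneg (mul_nonneg hρp.le (sum_nonneg fun k' _ => mul_nonneg (hβ m k') ?_)) hσ2.le
  have := (hδ k k').1
  exact add_nonneg (by positivity) (sub_nonneg.2 hκ)

lemma lam_nonneg (hP : P.Valid) (hβ : ∀ m k, 0 ≤ P.β m k) (hκt : κt ∈ Set.Icc (0 : ℝ) 1)
    (hκr : κr ∈ Set.Icc (0 : ℝ) 1) (m : ℕ) (k : Fin P.K) : 0 ≤ P.lam κt κr m k :=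
  mul_nonneg (mul_nonneg (Real.sqrt_nonneg _) (hβ m k)) (P.c_nonneg hP hβ hκt hκr m k)

lemma A_nonneg (hP : P.Valid) (M : ℕ) (k : Fin P.K) : 0 ≤ P.A κt κr M k :=
  mul_nonneg (hP.2.2.2.2.1 k).1.le (sq_nonneg _)

lemma B_nonneg (hP : P.Valid) (hβ : ∀ m k, 0 ≤ P.β m k) (hκt : κt ∈ Set.Icc (0 : ℝ) 1)
    (hκr : κr ∈ Set.Icc (0 : ℝ) 1) (M : ℕ) (k : Fin P.K) : 0 ≤ P.B κt κr M k := by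
  have hlam := P.lam_nonneg hP hβ hκt hκr
  obtain ⟨-, -, hρp, -, hγ, -, -⟩ := hP
  have h1κr : 0 ≤ 1 - κr := sub_nonneg.2 hκr.2
  refine sum_nonneg fun k' _ => mul_nonneg (hγ k').1.le (add_nonneg ?_ ?_)
  · exact sum_nonneg fun m _ => mul_nonneg (hlam m k) (hβ m k')
  · exact mul_nonneg (by positivity) (sum_nonneg fun m _ => by positivity)

lemma D_nonneg (hP : P.Valid) (hβ : ∀ m k, 0 ≤ P.β m k) (hκt : κt ∈ Set.Icc (0 : ℝ) 1)
    (hκr : κr ∈ Set.Icc (0 : ℝ) 1) (M : ℕ) (k : Fin P.K) : 0 ≤ P.D κt κr M k := by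
  have hlam := P.lam_nonneg hP hβ hκt hκr
  obtain ⟨-, -, hρp, -, hγ, hδ, -⟩ := hP
  obtain ⟨hκt0, hκt1⟩ := hκt
  obtain ⟨hκr0, hκr1⟩ := hκr
  refine sum_nonneg fun m _ => sum_nonneg fun k' _ => mul_nonneg (hγ k').1.le ?_
  have := hlam m k
  have := hβ m k'
  have := (hδ k k').1
  have : 0 ≤ 1 - κr := sub_nonneg.2 hκr1
  have : 0 ≤ 1 - κt := sub_nonneg.2 hκt1
  positivity

lemma E_nonneg (hP : P.Valid) (hβ : ∀ m k, 0 ≤ P.β m k) (hκt : κt ∈ Set.Icc (0 : ℝ) 1)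
    (hκr : κr ∈ Set.Icc (0 : ℝ) 1) {ρu : ℝ} (hρu : 0 ≤ ρu) (M : ℕ) (k : Fin P.K) :
    0 ≤ P.E κt κr ρu M k :=
  mul_nonneg (div_nonneg hP.2.2.2.1.le hρu)
    (sum_nonneg fun m _ => P.lam_nonneg hP hβ hκt hκr m k)

lemma A_le_C (hP : P.Valid) (hβ : ∀ m k, 0 < P.β m k) (hκt : κt ∈ Set.Icc (0 : ℝ) 1)
    (M : ℕ) (k : Fin P.K) : P.A κt κr M k ≤ P.C κt κr M k := by
  obtain ⟨-, -, -, -, hγ, hδ, hδkk⟩ := hP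
  set S := ∑ m ∈ range M, P.lam κt κr m k
  have hx : 0 ≤ (1 - κt) / (κt * P.τ) :=
    div_nonneg (sub_nonneg.2 hκt.2) (mul_nonneg hκt.1 (Nat.cast_nonneg _))
  have hself : ∑ m ∈ range M, P.lam κt κr m k * (P.β m k / P.β m k) = S :=
    sum_congr rfl fun m _ => by rw [div_self (hβ m k).ne', mul_one]
  calc P.A κt κr M k = P.γ k * S ^ 2 := rfl
    _ ≤ P.γ k * (P.δ k k + (1 - κt) / (κt * P.τ)) *
          (∑ m ∈ range M, P.lam κt κr m k * (P.β m k / P.β m k)) ^ 2 := by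
      rw [hself, hδkk]
      nlinarith [mul_nonneg (mul_nonneg (hγ k).1.le hx) (sq_nonneg S)]
    _ ≤ P.C κt κr M k :=
      single_le_sum (f := fun k' => P.γ k' * (P.δ k k' + (1 - κt) / (κt * P.τ)) *
          (∑ m ∈ range M, P.lam κt κr m k * (P.β m k' / P.β m k)) ^ 2)
        (fun k' _ => mul_nonneg (mul_nonneg (hγ k').1.le (add_nonneg (hδ k k').1 hx))
          (sq_nonneg _))
        (mem_univ k)

lemma mul_A_le_SINR_denominator (hP : P.Valid) (hβ : ∀ m k, 0 < P.β m k)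
    (hκt : κt ∈ Set.Icc (0 : ℝ) 1) (hκr : κr ∈ Set.Icc (0 : ℝ) 1) {ρu : ℝ} (hρu : 0 ≤ ρu)
    (M : ℕ) (k : Fin P.K) :
    κr * (1 - κt) * P.A κt κr M k ≤
      κr * P.B κt κr M k + κr * P.C κt κr M k - κr * κt * P.A κt κr M k +
        (1 - κr) * P.D κt κr M k + P.E κt κr ρu M k := by
  have hβ' : ∀ m k, 0 ≤ P.β m k := fun m k => (hβ m k).le
  have hB := mul_nonneg hκr.1 (P.B_nonneg hP hβ' hκt hκr M k)
  have hC := mul_le_mul_of_nonneg_left (P.A_le_C (κr := κr) hP hβ hκt M k) hκr.1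
  have hD := mul_nonneg (sub_nonneg.2 hκr.2) (P.D_nonneg hP hβ' hκt hκr M k)
  have hE := P.E_nonneg hP hβ' hκt hκr hρu M k
  linarith

lemma SINR_nonneg (hP : P.Valid) (hβ : ∀ m k, 0 < P.β m k) (hκt : κt ∈ Set.Icc (0 : ℝ) 1)
    (hκr : κr ∈ Set.Icc (0 : ℝ) 1) {ρu : ℝ} (hρu : 0 ≤ ρu) (M : ℕ) (k : Fin P.K) :
    0 ≤ P.SINR κt κr ρu M k := by
  have hA := P.A_nonneg (κt := κt) (κr := κr) hP M k
  have hden := P.mul_A_le_SINR_denominator hP hβ hκt hκr hρu M k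
  obtain ⟨hκt0, hκt1⟩ := hκt
  have := hκr.1
  have := sub_nonneg.2 hκt1
  exact div_nonneg (by positivity) ((by positivity : 0 ≤ κr * (1 - κt) * _).trans hden)

lemma SINR_le (hP : P.Valid) (hβ : ∀ m k, 0 < P.β m k) (hκt : κt ∈ Set.Ico (0 : ℝ) 1)
    (hκr : κr ∈ Set.Icc (0 : ℝ) 1) {ρu : ℝ} (hρu : 0 ≤ ρu) (M : ℕ) (k : Fin P.K) :
    P.SINR κt κr ρu M k ≤ κt / (1 - κt) := by
  have hA := P.A_nonneg (κt := κt) (κr := κr) hP M k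
  have hden := P.mul_A_le_SINR_denominator hP hβ (Set.Ico_subset_Icc_self hκt) hκr hρu M k
  obtain ⟨hκt0, hκt1⟩ := hκt
  have h1κt : 0 < 1 - κt := sub_pos.2 hκt1
  have := hκr.1
  refine div_le_of_le_mul₀ ((by positivity : 0 ≤ κr * (1 - κt) * _).trans hden)
    (by positivity) ?_
  calc κr * κt * P.A κt κr M k
      = κt / (1 - κt) * (κr * (1 - κt) * P.A κt κr M k) := by field_simp
    _ ≤ κt / (1 - κt) * _ := mul_le_mul_of_nonneg_left hden (by positivity)

end

theorem tendsto_R_zero (hP : P.Valid) (hβ : ∀ m k, 0 < P.β m k)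
    {κt κr : ℕ → ℝ} (hκt : Tendsto κt atTop (𝓝 0)) (hκt_nonneg : ∀ᶠ M in atTop, 0 ≤ κt M)
    (hκr : ∀ᶠ M in atTop, κr M ∈ Set.Icc (0 : ℝ) 1) {ρu : ℝ} (hρu : 0 ≤ ρu) (k : Fin P.K) :
    Tendsto (fun M => P.R (κt M) (κr M) ρu M k) atTop (𝓝 0) := by
  have hcap : Tendsto (fun M => κt M / (1 - κt M)) atTop (𝓝 0) := by
    have := hκt.div (tendsto_const_nhds.sub hκt) (sub_ne_zero.2 one_ne_zero)
    rwa [sub_zero, zero_div] at this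
  have hκt_mem : ∀ᶠ M in atTop, κt M ∈ Set.Ico (0 : ℝ) 1 :=
    hκt_nonneg.and (hκt.eventually (gt_mem_nhds one_pos))
  have hSINR : Tendsto (fun M => P.SINR (κt M) (κr M) ρu M k) atTop (𝓝 0) := by
    refine tendsto_of_tendsto_of_tendsto_of_le_of_le' tendsto_const_nhds hcap ?_ ?_
    · filter_upwards [hκt_mem, hκr] with M hM hM'
      exact P.SINR_nonneg hP hβ (Set.Ico_subset_Icc_self hM) hM' hρu M k
    · filter_upwards [hκt_mem, hκr] with M hM hM'
      exact P.SINR_le hP hβ hM hM' hρu M k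
  have hlog := (Real.continuousAt_logb (b := 2) one_ne_zero).tendsto
  simpa [R, Function.comp_def] using hlog.comp (by simpa using hSINR.const_add 1)

end Params

/-- Corollary 1, first case: with hardware-quality scaling exponents `z_t > 0`
and `z_r ≥ 0`, the spectral efficiency of every UE tends to `0` as `M → ∞`. -/
theorem hardware_scaling_law_vanishing_zt_pos
    (P : Params) (hP : P.Valid) (ρu : ℝ) (hρu : 0 < ρu)
    (βmin βmax : ℝ) (hβmin : 0 < βmin)
    (hβ : ∀ m : ℕ, ∀ k : Fin P.K, βmin ≤ P.β m k ∧ P.β m k ≤ βmax)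
    (κt0 κr0 : ℝ) (hκt0 : 0 < κt0 ∧ κt0 ≤ 1) (hκr0 : 0 < κr0 ∧ κr0 ≤ 1)
    (zt zr : ℝ) (hzt : 0 < zt) (hzr : 0 ≤ zr) (k : Fin P.K) :
    Filter.Tendsto
      (fun M : ℕ => P.R (κt0 / (M : ℝ) ^ zt) (κr0 / (M : ℝ) ^ zr) ρu M k)
      Filter.atTop (nhds 0) := by
  have hβ_pos : ∀ m k, 0 < P.β m k := fun m k => hβmin.trans_le (hβ m k).1
  have hκt : Tendsto (fun M : ℕ => κt0 / (M : ℝ) ^ zt) atTop (𝓝 0) :=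
    tendsto_const_nhds.div_atTop ((tendsto_rpow_atTop hzt).comp tendsto_natCast_atTop_atTop)
  have hκt_nonneg : ∀ M : ℕ, 0 ≤ κt0 / (M : ℝ) ^ zt := fun M =>
    div_nonneg hκt0.1.le (Real.rpow_nonneg M.cast_nonneg zt)
  have hκr : ∀ᶠ M : ℕ in atTop, κr0 / (M : ℝ) ^ zr ∈ Set.Icc (0 : ℝ) 1 := by
    filter_upwards [eventually_ge_atTop 1] with M hM
    have hMzr : 1 ≤ (M : ℝ) ^ zr := Real.one_le_rpow (Nat.one_le_cast.2 hM) hzr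
    exact ⟨div_nonneg hκr0.1.le (by positivity),
      div_le_one_of_le₀ (hκr0.2.trans hMzr) (by positivity)⟩
  exact P.tendsto_R_zero hP hβ_pos hκt (.of_forall hκt_nonneg) hκr hρu.le k
end
end

section
/- Hardware-quality scaling law, second case (Corollary 1): in the asymptotic setting with scaling exponents z_t = 0 and z_r > 1/2, for every UE index k the spectral efficiency satisfies R_k(M) → 0 as the number of APs M → ∞. -/
open Finset Filter Topology

noncomputable section

/-!
The denominator of `SINR_k` dominates the noise term `E_k = (σ²/ρ_u) Σ_m λ_{mk}`: `B_k` and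
`D_k` are nonnegative and the `k' = k` summand of `C_k` alone is at least `A_k ≥ κ_t A_k`.
Hence `SINR_k ≤ κ_r κ_t γ_k ρ_u Σ_m λ_{mk} / σ²`, and since `λ_{mk} ≤ τ ρ_p κ_r κ_t β_max² / σ²`,
`SINR_k = O(κ_r² M)`. With `κ_t` fixed and `κ_r = κ_{r0} M^{-z_r}` this is `O(M^{1 - 2 z_r}) → 0`,
so `R_k = log₂ (1 + SINR_k) → 0`.
-/

namespace Params

variable {P : Params} {κt κr : ℝ}

def cDenom (P : Params) (κt κr : ℝ) (m : ℕ) (k : Fin P.K) : ℝ :=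
  P.ρp * ∑ k' : Fin P.K, P.β m k' * (κr * κt * (P.τ : ℝ) * P.δ k k' + (1 - κr * κt)) + P.σ2

lemma sigma2_le_cDenom (hρp : 0 ≤ P.ρp) (hβ : ∀ m k, 0 ≤ P.β m k)
    (hδ : ∀ k k', 0 ≤ P.δ k k') (hκ₀ : 0 ≤ κr * κt) (hκ₁ : κr * κt ≤ 1)
    (m : ℕ) (k : Fin P.K) : P.σ2 ≤ P.cDenom κt κr m k := by
  refine le_add_of_nonneg_left (mul_nonneg hρp (sum_nonneg fun k' _ => mul_nonneg (hβ m k') ?_))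
  exact add_nonneg (mul_nonneg (mul_nonneg hκ₀ P.τ.cast_nonneg) (hδ k k')) (sub_nonneg.2 hκ₁)

lemma lam_eq (hκ : 0 ≤ (P.τ : ℝ) * P.ρp * κr * κt) (m : ℕ) (k : Fin P.K) :
    P.lam κt κr m k = (P.τ : ℝ) * P.ρp * κr * κt * P.β m k ^ 2 / P.cDenom κt κr m k := by
  change √_ * P.β m k * (√_ * P.β m k / P.cDenom κt κr m k) = _
  linear_combination (P.β m k ^ 2 / P.cDenom κt κr m k) * Real.mul_self_sqrt hκ

/-- Also true when `β m k = 0`, where `β m k / β m k = 0`: then `λ_{mk} = 0`. -/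
lemma lam_mul_div_self (m : ℕ) (k : Fin P.K) :
    P.lam κt κr m k * (P.β m k / P.β m k) = P.lam κt κr m k := by
  rcases eq_or_ne (P.β m k) 0 with h | h
  · simp [lam, h]
  · rw [div_self h, mul_one]

lemma lam_nonneg_s1 (hρp : 0 ≤ P.ρp) (hσ2 : 0 < P.σ2) (hβ : ∀ m k, 0 ≤ P.β m k)
    (hδ : ∀ k k', 0 ≤ P.δ k k') (hκ₀ : 0 ≤ κr * κt) (hκ₁ : κr * κt ≤ 1)
    (m : ℕ) (k : Fin P.K) : 0 ≤ P.lam κt κr m k := by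
  have hs : 0 ≤ (P.τ : ℝ) * P.ρp * κr * κt := by
    rw [mul_assoc _ κr]; exact mul_nonneg (mul_nonneg P.τ.cast_nonneg hρp) hκ₀
  rw [lam_eq hs]
  exact div_nonneg (mul_nonneg hs (sq_nonneg _))
    (hσ2.le.trans (sigma2_le_cDenom hρp hβ hδ hκ₀ hκ₁ m k))

lemma lam_le {βmax : ℝ} (hρp : 0 ≤ P.ρp) (hσ2 : 0 < P.σ2) (hβ : ∀ m k, 0 ≤ P.β m k)
    (hδ : ∀ k k', 0 ≤ P.δ k k') (hκ₀ : 0 ≤ κr * κt) (hκ₁ : κr * κt ≤ 1)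
    {m : ℕ} {k : Fin P.K} (hβmax : P.β m k ≤ βmax) :
    P.lam κt κr m k ≤ (P.τ : ℝ) * P.ρp * κr * κt * βmax ^ 2 / P.σ2 := by
  have hs : 0 ≤ (P.τ : ℝ) * P.ρp * κr * κt := by
    rw [mul_assoc _ κr]; exact mul_nonneg (mul_nonneg P.τ.cast_nonneg hρp) hκ₀
  rw [lam_eq hs]
  exact div_le_div₀ (mul_nonneg hs (sq_nonneg _))
    (mul_le_mul_of_nonneg_left (pow_le_pow_left₀ (hβ m k) hβmax 2) hs) hσ2
    (sigma2_le_cDenom hρp hβ hδ hκ₀ hκ₁ m k)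

lemma B_nonneg_s1 (hρp : 0 ≤ P.ρp) (hβ : ∀ m k, 0 ≤ P.β m k) (hγ : ∀ k, 0 ≤ P.γ k)
    (hκr₁ : κr ≤ 1) {k : Fin P.K} (hlam : ∀ m, 0 ≤ P.lam κt κr m k) (M : ℕ) :
    0 ≤ P.B κt κr M k :=
  sum_nonneg fun k' _ => mul_nonneg (hγ k') <| add_nonneg
    (sum_nonneg fun m _ => mul_nonneg (hlam m) (hβ m k'))
    (mul_nonneg (mul_nonneg hρp (sub_nonneg.2 hκr₁)) (sum_nonneg fun _ _ => by positivity))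

lemma D_nonneg_s1 (hρp : 0 ≤ P.ρp) (hβ : ∀ m k, 0 ≤ P.β m k) (hγ : ∀ k, 0 ≤ P.γ k)
    (hδ : ∀ k k', 0 ≤ P.δ k k') (hκt₀ : 0 ≤ κt) (hκt₁ : κt ≤ 1) (hκr₀ : 0 ≤ κr)
    (hκr₁ : κr ≤ 1) {k : Fin P.K} (hlam : ∀ m, 0 ≤ P.lam κt κr m k) (M : ℕ) :
    0 ≤ P.D κt κr M k := by
  refine sum_nonneg fun m _ => sum_nonneg fun k' _ => mul_nonneg (hγ k') ?_
  have hdist : 0 ≤ (P.τ : ℝ) * κt * P.δ k k' + (1 - κt) :=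
    add_nonneg (mul_nonneg (mul_nonneg P.τ.cast_nonneg hκt₀) (hδ k k')) (sub_nonneg.2 hκt₁)
  have hc : 0 ≤ P.c κt κr m k ^ 2 * (1 - κr) := mul_nonneg (sq_nonneg _) (sub_nonneg.2 hκr₁)
  exact add_nonneg (add_nonneg (mul_nonneg (hlam m) (hβ m k'))
    (mul_nonneg (mul_nonneg hc hρp) (sq_nonneg _)))
    (mul_nonneg (mul_nonneg (mul_nonneg (mul_nonneg (sq_nonneg _) hκr₀) hρp) (hβ m k')) hdist)

lemma A_le_C_s1 (hγ : ∀ k, 0 ≤ P.γ k) (hδ : ∀ k k', 0 ≤ P.δ k k') {k : Fin P.K}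
    (hδkk : P.δ k k = 1) (hκt₀ : 0 ≤ κt) (hκt₁ : κt ≤ 1) (M : ℕ) :
    P.A κt κr M k ≤ P.C κt κr M k := by
  have he : 0 ≤ (1 - κt) / (κt * P.τ) :=
    div_nonneg (sub_nonneg.2 hκt₁) (mul_nonneg hκt₀ P.τ.cast_nonneg)
  calc P.A κt κr M k
      ≤ P.γ k * (P.δ k k + (1 - κt) / (κt * P.τ)) *
          (∑ m ∈ range M, P.lam κt κr m k * (P.β m k / P.β m k)) ^ 2 := by
        simp only [lam_mul_div_self, hδkk, A, mul_add, mul_one, add_mul]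
        exact le_add_of_nonneg_right (mul_nonneg (mul_nonneg (hγ k) he) (sq_nonneg _))
    _ ≤ P.C κt κr M k :=
        single_le_sum (f := fun k' => P.γ k' * (P.δ k k' + (1 - κt) / (κt * P.τ)) *
          (∑ m ∈ range M, P.lam κt κr m k * (P.β m k' / P.β m k)) ^ 2)
          (fun k' _ => mul_nonneg (mul_nonneg (hγ k') (add_nonneg (hδ k k') he)) (sq_nonneg _))
          (mem_univ k)

section SINR

variable {ρu : ℝ} {M : ℕ} {k : Fin P.K}

lemma E_le_SINR_denom (hρp : 0 ≤ P.ρp) (hσ2 : 0 < P.σ2) (hβ : ∀ m k, 0 ≤ P.β m k)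
    (hγ : ∀ k, 0 ≤ P.γ k) (hδ : ∀ k k', 0 ≤ P.δ k k') (hδkk : P.δ k k = 1)
    (hκt₀ : 0 ≤ κt) (hκt₁ : κt ≤ 1) (hκr₀ : 0 ≤ κr) (hκr₁ : κr ≤ 1) :
    P.E κt κr ρu M k ≤ κr * P.B κt κr M k + κr * P.C κt κr M k -
      κr * κt * P.A κt κr M k + (1 - κr) * P.D κt κr M k + P.E κt κr ρu M k := by
  have hlam m := lam_nonneg_s1 hρp hσ2 hβ hδ (mul_nonneg hκr₀ hκt₀) (mul_le_one₀ hκr₁ hκt₀ hκt₁) m k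
  have hA : 0 ≤ P.A κt κr M k := mul_nonneg (hγ k) (sq_nonneg _)
  have hκtA : κt * P.A κt κr M k ≤ P.C κt κr M k :=
    (mul_le_of_le_one_left hA hκt₁).trans (A_le_C_s1 hγ hδ hδkk hκt₀ hκt₁ M)
  nlinarith [mul_nonneg hκr₀ (B_nonneg_s1 hρp hβ hγ hκr₁ hlam M),
    mul_le_mul_of_nonneg_left hκtA hκr₀,
    mul_nonneg (sub_nonneg.2 hκr₁) (D_nonneg_s1 hρp hβ hγ hδ hκt₀ hκt₁ hκr₀ hκr₁ hlam M)]

lemma E_nonneg_s1 (hρu : 0 ≤ ρu) (hρp : 0 ≤ P.ρp) (hσ2 : 0 < P.σ2) (hβ : ∀ m k, 0 ≤ P.β m k)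
    (hδ : ∀ k k', 0 ≤ P.δ k k') (hκ₀ : 0 ≤ κr * κt) (hκ₁ : κr * κt ≤ 1) :
    0 ≤ P.E κt κr ρu M k :=
  mul_nonneg (div_nonneg hσ2.le hρu) (sum_nonneg fun m _ => lam_nonneg_s1 hρp hσ2 hβ hδ hκ₀ hκ₁ m k)

lemma SINR_nonneg_s1 (hρu : 0 ≤ ρu) (hρp : 0 ≤ P.ρp) (hσ2 : 0 < P.σ2) (hβ : ∀ m k, 0 ≤ P.β m k)
    (hγ : ∀ k, 0 ≤ P.γ k) (hδ : ∀ k k', 0 ≤ P.δ k k') (hδkk : P.δ k k = 1)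
    (hκt₀ : 0 ≤ κt) (hκt₁ : κt ≤ 1) (hκr₀ : 0 ≤ κr) (hκr₁ : κr ≤ 1) :
    0 ≤ P.SINR κt κr ρu M k :=
  div_nonneg (mul_nonneg (mul_nonneg hκr₀ hκt₀) (mul_nonneg (hγ k) (sq_nonneg _)))
    ((E_nonneg_s1 hρu hρp hσ2 hβ hδ (mul_nonneg hκr₀ hκt₀) (mul_le_one₀ hκr₁ hκt₀ hκt₁)).trans
      (E_le_SINR_denom hρp hσ2 hβ hγ hδ hδkk hκt₀ hκt₁ hκr₀ hκr₁))

lemma SINR_le_of_le_mul_E {x : ℝ} (hx : 0 ≤ x)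
    (hN : κr * κt * P.A κt κr M k ≤ x * P.E κt κr ρu M k) (hρu : 0 ≤ ρu) (hρp : 0 ≤ P.ρp)
    (hσ2 : 0 < P.σ2) (hβ : ∀ m k, 0 ≤ P.β m k) (hγ : ∀ k, 0 ≤ P.γ k)
    (hδ : ∀ k k', 0 ≤ P.δ k k') (hδkk : P.δ k k = 1)
    (hκt₀ : 0 ≤ κt) (hκt₁ : κt ≤ 1) (hκr₀ : 0 ≤ κr) (hκr₁ : κr ≤ 1) :
    P.SINR κt κr ρu M k ≤ x := by
  have hden := E_le_SINR_denom (ρu := ρu) (M := M) hρp hσ2 hβ hγ hδ hδkk hκt₀ hκt₁ hκr₀ hκr₁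
  have hE := E_nonneg_s1 hρu hρp hσ2 hβ hδ (M := M) (k := k) (mul_nonneg hκr₀ hκt₀)
    (mul_le_one₀ hκr₁ hκt₀ hκt₁)
  exact div_le_of_le_mul₀ (hE.trans hden) hx (hN.trans (mul_le_mul_of_nonneg_left hden hx))

theorem SINR_le_mul_sq_mul {βmax : ℝ} (hρu : 0 < ρu) (hρp : 0 ≤ P.ρp) (hσ2 : 0 < P.σ2)
    (hβ : ∀ m k, 0 ≤ P.β m k) (hβmax : ∀ m, P.β m k ≤ βmax) (hγ : ∀ k, 0 ≤ P.γ k)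
    (hγk : P.γ k ≤ 1) (hδ : ∀ k k', 0 ≤ P.δ k k') (hδkk : P.δ k k = 1)
    (hκt₀ : 0 ≤ κt) (hκt₁ : κt ≤ 1) (hκr₀ : 0 ≤ κr) (hκr₁ : κr ≤ 1) :
    P.SINR κt κr ρu M k ≤
      κt ^ 2 * P.τ * P.ρp * βmax ^ 2 * ρu / P.σ2 ^ 2 * (κr ^ 2 * M) := by
  have hκ₀ : 0 ≤ κr * κt := mul_nonneg hκr₀ hκt₀
  have hκ₁ : κr * κt ≤ 1 := mul_le_one₀ hκr₁ hκt₀ hκt₁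
  have hlam m := lam_nonneg_s1 hρp hσ2 hβ hδ hκ₀ hκ₁ m k
  set S := ∑ m ∈ range M, P.lam κt κr m k
  have hS : 0 ≤ S := sum_nonneg fun m _ => hlam m
  have hSle : S ≤ M * ((P.τ : ℝ) * P.ρp * κr * κt * βmax ^ 2 / P.σ2) := by
    simpa using sum_le_card_nsmul (range M) _ _ fun m _ => lam_le hρp hσ2 hβ hδ hκ₀ hκ₁ (hβmax m)
  refine SINR_le_of_le_mul_E ?_ ?_ hρu.le hρp hσ2 hβ hγ hδ hδkk hκt₀ hκt₁ hκr₀ hκr₁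
  · exact mul_nonneg (div_nonneg (mul_nonneg (mul_nonneg (mul_nonneg (by positivity) hρp)
      (sq_nonneg _)) hρu.le) (sq_nonneg _)) (by positivity)
  calc κr * κt * P.A κt κr M k = κr * κt * S * (P.γ k * S) := by unfold A; ring
    _ ≤ κr * κt * S * (M * ((P.τ : ℝ) * P.ρp * κr * κt * βmax ^ 2 / P.σ2)) :=
        mul_le_mul_of_nonneg_left ((mul_le_of_le_one_left hS hγk).trans hSle)
          (mul_nonneg hκ₀ hS)
    _ = _ := by unfold E; field_simp; ring

end SINR

end Params

lemma tendsto_div_rpow_sq_mul_atTop (a : ℝ) {z : ℝ} (hz : 1 / 2 < z) :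
    Tendsto (fun M : ℕ => (a / (M : ℝ) ^ z) ^ 2 * M) atTop (𝓝 0) := by
  have h : Tendsto (fun M : ℕ => a ^ 2 * (M : ℝ) ^ (-(2 * z - 1))) atTop (𝓝 0) := by
    simpa using ((tendsto_rpow_neg_atTop (by linarith : 0 < 2 * z - 1)).comp
      tendsto_natCast_atTop_atTop).const_mul (a ^ 2)
  refine h.congr' ?_
  filter_upwards [eventually_gt_atTop 0] with M hM
  have hM' : (0 : ℝ) < M := by exact_mod_cast hM
  have hsq : (M : ℝ) ^ (2 * z) = ((M : ℝ) ^ z) ^ 2 := by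
    rw [← Real.rpow_mul_natCast hM'.le]; ring_nf
  rw [neg_sub, Real.rpow_sub hM', Real.rpow_one, hsq]
  field_simp

lemma div_rpow_mem_Icc {a z : ℝ} (ha₀ : 0 ≤ a) (ha₁ : a ≤ 1) (hz : 0 ≤ z) {M : ℕ} (hM : 1 ≤ M) :
    a / (M : ℝ) ^ z ∈ Set.Icc 0 1 := by
  have h1 : 1 ≤ (M : ℝ) ^ z := Real.one_le_rpow (by exact_mod_cast hM) hz
  exact ⟨div_nonneg ha₀ (by positivity), div_le_one_of_le₀ (ha₁.trans h1) (by positivity)⟩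

/-- Corollary 1, second case: with scaling exponents `z_t = 0` and `z_r > 1/2`
(i.e. `κ_t(M) = κ_{t0}` constant and `κ_r(M) = κ_{r0}/M^{z_r}`), the spectral
efficiency of every UE tends to `0` as `M → ∞`. -/
theorem hardware_scaling_law_vanishing_zr_large
    (P : Params) (hP : P.Valid) (ρu : ℝ) (hρu : 0 < ρu)
    (βmin βmax : ℝ) (hβmin : 0 < βmin)
    (hβ : ∀ m : ℕ, ∀ k : Fin P.K, βmin ≤ P.β m k ∧ P.β m k ≤ βmax)
    (κt0 κr0 : ℝ) (hκt0 : 0 < κt0 ∧ κt0 ≤ 1) (hκr0 : 0 < κr0 ∧ κr0 ≤ 1)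
    (zr : ℝ) (hzr : 1 / 2 < zr) (k : Fin P.K) :
    Filter.Tendsto
      (fun M : ℕ => P.R κt0 (κr0 / (M : ℝ) ^ zr) ρu M k)
      Filter.atTop (nhds 0) := by
  obtain ⟨-, -, hρp, hσ2, hγ, hδ, hδkk⟩ := hP
  have hβ₀ m k : 0 ≤ P.β m k := hβmin.le.trans (hβ m k).1
  have hκr : ∀ᶠ M : ℕ in atTop, κr0 / (M : ℝ) ^ zr ∈ Set.Icc 0 1 :=
    (eventually_ge_atTop 1).mono fun M hM =>
      div_rpow_mem_Icc hκr0.1.le hκr0.2 (by linarith) hM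
  have hbound := (tendsto_div_rpow_sq_mul_atTop κr0 hzr).const_mul
    (κt0 ^ 2 * P.τ * P.ρp * βmax ^ 2 * ρu / P.σ2 ^ 2)
  rw [mul_zero] at hbound
  have hSINR : Tendsto (fun M : ℕ => P.SINR κt0 (κr0 / (M : ℝ) ^ zr) ρu M k) atTop (𝓝 0) := by
    refine squeeze_zero' (hκr.mono fun M ⟨h₀, h₁⟩ => ?_) (hκr.mono fun M ⟨h₀, h₁⟩ =>
      Params.SINR_le_mul_sq_mul hρu hρp.le hσ2 hβ₀ (fun m => (hβ m k).2) (fun k => (hγ k).1.le)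
        (hγ k).2 (fun k k' => (hδ k k').1) (hδkk k) hκt0.1.le hκt0.2 h₀ h₁) hbound
    exact Params.SINR_nonneg_s1 hρu.le hρp.le hσ2 hβ₀ (fun k => (hγ k).1.le)
      (fun k k' => (hδ k k').1) (hδkk k) hκt0.1.le hκt0.2 h₀ h₁
  have := (tendsto_const_nhds (x := (1 : ℝ))).add hSINR |>.logb (b := 2) (by norm_num)
  simpa [Params.R] using this
end
end
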